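/- arXiv:1008.5092 — 5 statements merged into one kernel-verified Lean document; each statement's English description precedes it below -/
import Mathlib

section
/- Let k be an even integer with k ≥ 12, let f ∈ S_k(SL(2,ℤ)), let z₀ ∈ ℍ and m ∈ ℤ_{≥0}. Then c_{z₀}(f,m) = Σ_{r=0}^{m} C(m+k−1, r+k−1) · (z₀ − conj(z₀))^{r+k/2} · f^{(r)}(z₀)/r!, where f^{(r)} denotes the r-th complex derivative of f and C(·,·) is the binomial coefficient. -/
noncomputable section

open Complex Real MeasureTheory

/-- The weight-`k` slash of `f` by `σ_{z₀}`, as a function on the unit disc. -/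
def slashDisc (k : ℕ) (z₀ : ℂ) (f : ℂ → ℂ) (w : ℂ) : ℂ :=
  (2 * Complex.I * (z₀.im : ℂ)) ^ (k / 2) * (1 - w) ^ (-(k : ℤ)) *
    f ((z₀ - (starRingEnd ℂ) z₀ * w) / (1 - w))

/-- The `n`-th Fourier (normalized Taylor) coefficient of `f` at `z₀`, in weight `k`. -/
def fourierCoeffAt (k : ℕ) (z₀ : ℂ) (f : ℂ → ℂ) (n : ℕ) : ℂ :=
  iteratedDeriv n (slashDisc k z₀ f) 0 / (n.factorial : ℂ)

/-- Holomorphic cusp form of weight `k` for `SL(2,ℤ)`. -/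
def IsCuspForm (k : ℕ) (f : ℂ → ℂ) : Prop :=
  (∀ z : ℂ, 0 < z.im → DifferentiableAt ℂ f z) ∧
  (∀ γ : Matrix.SpecialLinearGroup (Fin 2) ℤ, ∀ z : ℂ, 0 < z.im →
      f ((((γ : Matrix (Fin 2) (Fin 2) ℤ) 0 0 : ℂ) * z + ((γ : Matrix (Fin 2) (Fin 2) ℤ) 0 1 : ℂ)) /
          (((γ : Matrix (Fin 2) (Fin 2) ℤ) 1 0 : ℂ) * z + ((γ : Matrix (Fin 2) (Fin 2) ℤ) 1 1 : ℂ)))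
        = (((γ : Matrix (Fin 2) (Fin 2) ℤ) 1 0 : ℂ) * z +
            ((γ : Matrix (Fin 2) (Fin 2) ℤ) 1 1 : ℂ)) ^ k * f z) ∧
  (∀ ε : ℝ, 0 < ε → ∃ Y : ℝ, ∀ x y : ℝ, Y < y → ‖f (x + y * Complex.I)‖ < ε)

/-- Ramanujan's Delta function. -/
def Delta (z : ℂ) : ℂ :=
  Complex.exp (2 * π * Complex.I * z) *
    ∏' n : ℕ, (1 - Complex.exp (2 * π * Complex.I * (n + 1) * z)) ^ 24

def E2star (z : ℂ) : ℂ :=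
  1 - 24 * ∑' n : ℕ, (ArithmeticFunction.sigma 1 (n + 1) : ℂ) *
      Complex.exp (2 * π * Complex.I * (n + 1) * z) - 3 / (π * z.im)

def E4 (z : ℂ) : ℂ :=
  1 + 240 * ∑' n : ℕ, (ArithmeticFunction.sigma 3 (n + 1) : ℂ) *
      Complex.exp (2 * π * Complex.I * (n + 1) * z)

def E6 (z : ℂ) : ℂ :=
  1 - 504 * ∑' n : ℕ, (ArithmeticFunction.sigma 5 (n + 1) : ℂ) *
      Complex.exp (2 * π * Complex.I * (n + 1) * z)

/-- The polynomials 𝓑ₙ ∈ ℤ[Q,R]; `X 0` is `Q = E₄`, `X 1` is `R = E₆`. -/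
def Bpoly : ℕ → MvPolynomial (Fin 2) ℤ
  | 0 => 1
  | 1 => 0
  | (n + 2) =>
      -4 * MvPolynomial.X 1 * MvPolynomial.pderiv 0 (Bpoly (n + 1))
        - 6 * MvPolynomial.X 0 ^ 2 * MvPolynomial.pderiv 1 (Bpoly (n + 1))
        - MvPolynomial.C (((n : ℤ) + 1) * ((n : ℤ) + 12)) * MvPolynomial.X 0 * Bpoly n

/-- The polynomials pₙ(t). -/
def ppoly : ℕ → Polynomial ℤ
  | 0 => 1
  | 1 => 0
  | (n + 2) =>
      Polynomial.C (-2 * ((n : ℤ) + 1)) * Polynomial.X * ppoly (n + 1)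
        + 6 * (Polynomial.X ^ 2 - 1) * Polynomial.derivative (ppoly (n + 1))
        - Polynomial.C (((n : ℤ) + 1) * ((n : ℤ) + 12)) * ppoly n

/-- The polynomials qₙ(t). -/
def qpoly : ℕ → Polynomial ℤ
  | 0 => 1
  | 1 => 0
  | (n + 2) =>
      Polynomial.C (-2 * ((n : ℤ) + 1)) * Polynomial.X ^ 2 * qpoly (n + 1)
        + 4 * (Polynomial.X ^ 3 - 1) * Polynomial.derivative (qpoly (n + 1))
        - Polynomial.C (((n : ℤ) + 1) * ((n : ℤ) + 12)) * Polynomial.X * qpoly n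

/-- The general recursion q₀ = 1, q₁ = a₁,
`q_{n+1} = (a₁ + n a₂) q_n + a₃ q_n' + n(n+11) a₄ q_{n-1}`. -/
def qrec {R : Type*} [CommRing R] (a₁ a₂ a₃ a₄ : Polynomial R) : ℕ → Polynomial R
  | 0 => 1
  | 1 => a₁
  | (n + 2) =>
      (a₁ + ((n : Polynomial R) + 1) * a₂) * qrec a₁ a₂ a₃ a₄ (n + 1)
        + a₃ * Polynomial.derivative (qrec a₁ a₂ a₃ a₄ (n + 1))
        + ((n : Polynomial R) + 1) * ((n : Polynomial R) + 12) * a₄ * qrec a₁ a₂ a₃ a₄ n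

/-- Maass raising operator of weight `w`. -/
def raise (w : ℤ) (g : ℂ → ℂ) : ℂ → ℂ := fun z =>
  1 / (2 * π * Complex.I) * deriv g z - (w : ℂ) / (4 * π * z.im) * g z

/-- `raiseIter k m = ∂_{k+2m-2} ∘ ⋯ ∘ ∂_{k+2} ∘ ∂_k`. -/
def raiseIter (k : ℕ) : ℕ → (ℂ → ℂ) → (ℂ → ℂ)
  | 0 => fun g => g
  | (m + 1) => fun g => raise ((k : ℤ) + 2 * m) (raiseIter k m g)

/-- Möbius action of `SL(2,ℤ)` on `ℂ`. -/
def moebius (γ : Matrix.SpecialLinearGroup (Fin 2) ℤ) (z : ℂ) : ℂ :=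
  (((γ : Matrix (Fin 2) (Fin 2) ℤ) 0 0 : ℂ) * z + ((γ : Matrix (Fin 2) (Fin 2) ℤ) 0 1 : ℂ)) /
    (((γ : Matrix (Fin 2) (Fin 2) ℤ) 1 0 : ℂ) * z + ((γ : Matrix (Fin 2) (Fin 2) ℤ) 1 1 : ℂ))

/-- Order of the stabilizer of `z₀` in `PSL(2,ℤ)`. -/
def stabOrder (z₀ : ℂ) : ℕ :=
  Set.ncard {γ : Matrix.SpecialLinearGroup (Fin 2) ℤ | moebius γ z₀ = z₀} / 2

/-- The CM point attached to a fundamental discriminant `D < 0`.  -/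
def cmPoint (D : ℤ) : ℂ :=
  if D % 2 = 0 then Complex.I * (Real.sqrt (|D| : ℝ) : ℂ) / 2
  else (1 + Complex.I * (Real.sqrt (|D| : ℝ) : ℂ)) / 2

/-- A term of the weight-12 elliptic Poincaré series attached to `z₀`. -/
def poincareTerm (z₀ : ℂ) (m : ℕ) (γ : Matrix.SpecialLinearGroup (Fin 2) ℤ) (z : ℂ) : ℂ :=
  (2 * Complex.I * (z₀.im : ℂ)) ^ 6 * (moebius γ z - z₀) ^ m /
    ((moebius γ z - (starRingEnd ℂ) z₀) ^ (m + 12) *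
      (((γ : Matrix (Fin 2) (Fin 2) ℤ) 1 0 : ℂ) * z + ((γ : Matrix (Fin 2) (Fin 2) ℤ) 1 1 : ℂ)) ^ 12)

/-- `𝓔_m(z)`. -/
def Ecal (m : ℕ) (z : ℂ) : ℂ :=
  ∑ r ∈ Finset.range (m + 1),
    ((m.factorial / r.factorial : ℕ) : ℂ) * (Nat.choose (m + 11) (r + 11) : ℂ) *
      E2star z ^ (m - r) * MvPolynomial.aeval ![E4 z, E6 z] (Bpoly r)

/-!
Write `c = z₀ - z̄₀ = 2i Im z₀`. The Cayley map `w ↦ (z₀ - z̄₀ w)/(1 - w)` equals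
`z₀ + c · w/(1 - w)`, so `slashDisc k z₀ f w = c^{k/2} (1 - w)^{-k} Σ_r a_r c^r (w/(1 - w))^r`
with `a_r = f^{(r)}(z₀)/r!`. Expanding `(1 - w)^{-(r+k)} = Σ_j C(j+r+k-1, r+k-1) w^j` and collecting
the powers of `w` gives the claimed coefficients. The double series converges absolutely once
`|c| |w|/(1 - |w|) < Im z₀`, the radius of the Taylor series of `f` at `z₀`, e.g. for `|w| < 1/3`;
uniqueness of power series then identifies its coefficients with the Taylor coefficients at `0`.
-/

open Finset FormalMultilinearSeries
open scoped Nat NNReal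

theorem iteratedDeriv_div_factorial_eq_of_hasFPowerSeriesAt {𝕜 : Type*}
    [NontriviallyNormedField 𝕜] [CompleteSpace 𝕜] [CharZero 𝕜] {g : 𝕜 → 𝕜} {b : ℕ → 𝕜} {x : 𝕜}
    (hg : HasFPowerSeriesAt g (ofScalars 𝕜 b) x) (n : ℕ) :
    iteratedDeriv n g x / n ! = b n :=
  congrFun (ofScalars_series_injective 𝕜 𝕜
    (hg.analyticAt.hasFPowerSeriesAt.eq_formalMultilinearSeries hg)) n

theorem hasFPowerSeriesOnBall_ofScalars_of_hasSum {𝕜 : Type*} [RCLike 𝕜] {g : 𝕜 → 𝕜}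
    {b : ℕ → 𝕜} {r : ℝ≥0} (hr : 0 < r)
    (hg : ∀ w : 𝕜, ‖w‖ < r → HasSum (fun n ↦ b n * w ^ n) (g w)) :
    HasFPowerSeriesOnBall g (ofScalars 𝕜 b) 0 r where
  r_le := by
    refine ENNReal.le_of_forall_nnreal_lt fun s hs ↦ ?_
    have hsr : ‖((s : ℝ) : 𝕜)‖ < r := by simpa using hs
    refine (ofScalars 𝕜 b).le_radius_of_tendsto (l := 0) ?_
    simpa [ofScalars_norm] using (hg _ hsr).summable.tendsto_atTop_zero.norm
  r_pos := by simpa using hr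
  hasSum {w} hw := by
    simpa [ofScalars_apply_eq, mul_comm] using hg w (by simpa using hw)

theorem DifferentiableOn.summable_norm_iteratedDeriv_div_factorial_mul_pow {f : ℂ → ℂ} {z₀ : ℂ}
    {R ρ : ℝ} (hf : DifferentiableOn ℂ f (Metric.ball z₀ R)) (hρ : 0 ≤ ρ) (hρR : ρ < R) :
    Summable fun n ↦ ‖iteratedDeriv n f z₀ / (n ! : ℂ)‖ * ρ ^ n := by
  obtain ⟨R', hρR', hR'R⟩ := exists_between hρR
  lift R' to ℝ≥0 using hρ.trans hρR'.le
  have hcauchy := (hf.mono (Metric.closedBall_subset_ball hR'R)).hasFPowerSeriesOnBall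
    (NNReal.coe_pos.mp (hρ.trans_lt hρR'))
  have hp := hcauchy.hasFPowerSeriesAt.eq_formalMultilinearSeries
    (hcauchy.analyticAt.hasFPowerSeriesAt)
  lift ρ to ℝ≥0 using hρ
  set q := ofScalars ℂ fun n ↦ iteratedDeriv n f z₀ / (n ! : ℂ)
  have hrad : (ρ : ENNReal) < q.radius := by
    rw [← hp]
    exact lt_of_lt_of_le (by exact_mod_cast hρR') hcauchy.r_le
  simpa [q, ofScalars_norm] using q.summable_norm_mul_pow hrad

theorem HasSum.sum_antidiagonal {A α : Type*} [AddCommMonoid A] [HasAntidiagonal A]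
    [AddCommMonoid α] [TopologicalSpace α] [RegularSpace α] [ContinuousAdd α]
    {F : A × A → α} {s : α} (hF : HasSum F s) : HasSum (fun n ↦ ∑ x ∈ antidiagonal n, F x) s :=
  (HasAntidiagonal.sigmaAntidiagonalEquivProd.hasSum_iff.2 hF).sigma
    fun n ↦ (antidiagonal n).hasSum F

section BinomialTransform

variable {𝕜 : Type*} [RCLike 𝕜]

theorem hasSum_choose_mul_pow_add (p r : ℕ) {w : 𝕜} (hw : ‖w‖ < 1) :
    HasSum (fun j ↦ ((j + (r + p)).choose (r + p) : 𝕜) * w ^ (r + j))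
      ((w / (1 - w)) ^ r / (1 - w) ^ (p + 1)) := by
  have h1w : 1 - w ≠ 0 := sub_ne_zero.mpr (by rintro rfl; simp at hw)
  have hval :
      w ^ r * (1 / (1 - w) ^ (r + p + 1)) = (w / (1 - w)) ^ r / (1 - w) ^ (p + 1) := by
    rw [mul_one_div, div_pow, div_div, ← pow_add, add_assoc]
  exact hval ▸ ((hasSum_choose_mul_geometric_of_norm_lt_one (r + p) hw).mul_left (w ^ r)).congr_fun
    fun j ↦ by ring

theorem hasSum_sum_choose_mul_pow (p : ℕ) {a : ℕ → 𝕜} {w : 𝕜} (hw : ‖w‖ < 1)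
    (ha : Summable fun r ↦ ‖a r‖ * (‖w‖ / (1 - ‖w‖)) ^ r) :
    HasSum (fun n ↦ (∑ r ∈ range (n + 1), ((n + p).choose (r + p) : 𝕜) * a r) * w ^ n)
      ((∑' r, a r * (w / (1 - w)) ^ r) / (1 - w) ^ (p + 1)) := by
  set F : ℕ × ℕ → 𝕜 := fun x ↦
    a x.1 * (((x.2 + (x.1 + p)).choose (x.1 + p) : 𝕜) * w ^ (x.1 + x.2))
  have hrow (r : ℕ) : HasSum (fun j ↦ F (r, j)) (a r * ((w / (1 - w)) ^ r / (1 - w) ^ (p + 1))) :=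
    (hasSum_choose_mul_pow_add p r hw).mul_left (a r)
  have hrow_norm (r : ℕ) : HasSum (fun j ↦ ‖F (r, j)‖)
      (‖a r‖ * ((‖w‖ / (1 - ‖w‖)) ^ r / (1 - ‖w‖) ^ (p + 1))) := by
    refine ((hasSum_choose_mul_pow_add p r (by rwa [norm_norm])).mul_left ‖a r‖).congr_fun
      fun j ↦ ?_
    simp [F, norm_mul, norm_pow]
  have hF : Summable fun x ↦ ‖F x‖ := by
    refine (summable_prod_of_nonneg fun _ ↦ norm_nonneg _).2 ⟨fun r ↦ (hrow_norm r).summable, ?_⟩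
    simp only [(hrow_norm _).tsum_eq, ← mul_div_assoc]
    exact ha.div_const _
  have htotal := hF.of_norm.hasSum
  rw [← (htotal.prod_fiberwise hrow).tsum_eq] at htotal
  have hdiag (n : ℕ) :
      ∑ x ∈ antidiagonal n, F x =
        (∑ r ∈ range (n + 1), ((n + p).choose (r + p) : 𝕜) * a r) * w ^ n := by
    rw [Nat.sum_antidiagonal_eq_sum_range_succ_mk, sum_mul]
    refine sum_congr rfl fun r hr ↦ ?_
    have hrn : r ≤ n := Nat.lt_succ_iff.mp (mem_range.mp hr)
    simp only [F, Nat.sub_add_cancel hrn, Nat.add_sub_cancel' hrn, ← add_assoc]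
    ring
  simpa only [hdiag, ← mul_div_assoc, tsum_div_const] using htotal.sum_antidiagonal

end BinomialTransform

theorem Complex.im_pos_of_mem_ball_im {z w : ℂ} (hw : w ∈ Metric.ball z z.im) : 0 < w.im := by
  rw [Metric.mem_ball, dist_eq_norm] at hw
  have h := (Complex.abs_im_le_norm (w - z)).trans_lt hw
  rw [Complex.sub_im] at h
  linarith [neg_abs_le (w.im - z.im)]

theorem slashDisc_eq (k : ℕ) (z₀ : ℂ) (f : ℂ → ℂ) {w : ℂ} (hw : w ≠ 1) :
    slashDisc k z₀ f w = (z₀ - starRingEnd ℂ z₀) ^ (k / 2) *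
      f (z₀ + (z₀ - starRingEnd ℂ z₀) * (w / (1 - w))) / (1 - w) ^ k := by
  have h1w : 1 - w ≠ 0 := sub_ne_zero.mpr hw.symm
  have hcayley : (z₀ - starRingEnd ℂ z₀ * w) / (1 - w) =
      z₀ + (z₀ - starRingEnd ℂ z₀) * (w / (1 - w)) := by
    field_simp
    ring
  rw [slashDisc, hcayley, zpow_neg, zpow_natCast, Complex.sub_conj]
  push_cast
  ring

theorem hasSum_slashDisc (p : ℕ) {f : ℂ → ℂ} {z₀ : ℂ} (hz₀ : 0 < z₀.im)
    (hf : DifferentiableOn ℂ f (Metric.ball z₀ z₀.im)) {w : ℂ} (hw : ‖w‖ < 1 / 3) :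
    HasSum (fun n ↦ (z₀ - starRingEnd ℂ z₀) ^ ((p + 1) / 2) *
        (∑ r ∈ range (n + 1), ((n + p).choose (r + p) : ℂ) *
          (iteratedDeriv r f z₀ / r ! * (z₀ - starRingEnd ℂ z₀) ^ r)) * w ^ n)
      (slashDisc (p + 1) z₀ f w) := by
  have hc : ‖z₀ - starRingEnd ℂ z₀‖ = 2 * z₀.im := by
    rw [Complex.sub_conj, norm_mul, Complex.norm_I, mul_one, Complex.norm_real, Real.norm_eq_abs,
      abs_of_pos (by positivity)]
  set c := z₀ - starRingEnd ℂ z₀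
  have hw1 : ‖w‖ < 1 := by linarith
  have hw1' : 0 < 1 - ‖w‖ := by linarith
  set ρ := ‖w‖ / (1 - ‖w‖)
  have hρ : 2 * ρ < 1 := by
    rw [← mul_div_assoc, div_lt_one hw1']
    linarith
  set v := w / (1 - w)
  have hv : ‖v‖ ≤ ρ := by
    rw [norm_div]
    refine div_le_div_of_nonneg_left (norm_nonneg w) hw1' ?_
    simpa using norm_sub_norm_le (1 : ℂ) w
  have hcρ : ‖c‖ * ρ < z₀.im := by
    rw [hc]
    nlinarith
  have hmem : z₀ + c * v ∈ Metric.ball z₀ z₀.im := by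
    rw [Metric.mem_ball, dist_self_add_left, norm_mul]
    exact (mul_le_mul_of_nonneg_left hv (norm_nonneg c)).trans_lt hcρ
  have htaylor := Complex.taylorSeries_eq_on_ball' hmem hf
  have hsummable := hf.summable_norm_iteratedDeriv_div_factorial_mul_pow (by positivity) hcρ
  have hseries :=
    hasSum_sum_choose_mul_pow p (a := fun r ↦ iteratedDeriv r f z₀ / r ! * c ^ r) hw1
      (by simpa only [norm_mul, norm_pow, mul_pow, mul_assoc] using hsummable)
  rw [slashDisc_eq _ _ _ (by rintro rfl; norm_num at hw), ← htaylor]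
  have hterm (r : ℕ) : (r ! : ℂ)⁻¹ * iteratedDeriv r f z₀ * (z₀ + c * v - z₀) ^ r =
      iteratedDeriv r f z₀ / r ! * c ^ r * v ^ r := by
    rw [add_sub_cancel_left, mul_pow]
    ring
  rw [tsum_congr hterm, mul_div_assoc]
  simpa only [mul_assoc] using hseries.mul_left (c ^ ((p + 1) / 2))

theorem fourierCoeffAt_eq_sum_deriv_general (k : ℕ) (hk12 : 12 ≤ k)
    (f : ℂ → ℂ) (hf : IsCuspForm k f) (z₀ : ℂ) (hz₀ : 0 < z₀.im) (m : ℕ) :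
    fourierCoeffAt k z₀ f m =
      ∑ r ∈ Finset.range (m + 1),
        (Nat.choose (m + k - 1) (r + k - 1) : ℂ) *
          (z₀ - (starRingEnd ℂ) z₀) ^ (r + k / 2) * iteratedDeriv r f z₀ / (r.factorial : ℂ) := by
  obtain ⟨p, rfl⟩ : ∃ p, k = p + 1 := ⟨k - 1, by omega⟩
  have hdiff : DifferentiableOn ℂ f (Metric.ball z₀ z₀.im) := fun z hz ↦
    (hf.1 z (Complex.im_pos_of_mem_ball_im hz)).differentiableWithinAt
  have hball := hasFPowerSeriesOnBall_ofScalars_of_hasSum (r := 1 / 3) (by norm_num)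
    fun w hw ↦ hasSum_slashDisc p hz₀ hdiff (by simpa using hw)
  rw [fourierCoeffAt, iteratedDeriv_div_factorial_eq_of_hasFPowerSeriesAt hball.hasFPowerSeriesAt,
    mul_sum]
  refine sum_congr rfl fun r _ ↦ ?_
  simp only [Nat.add_succ_sub_one]
  ring

/-- the Fourier coefficient at `z₀` in terms of derivatives of `f`. -/
theorem fourierCoeffAt_eq_sum_deriv (k : ℕ) (hk : Even k) (hk12 : 12 ≤ k)
    (f : ℂ → ℂ) (hf : IsCuspForm k f) (z₀ : ℂ) (hz₀ : 0 < z₀.im) (m : ℕ) :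
    fourierCoeffAt k z₀ f m =
      ∑ r ∈ Finset.range (m + 1),
        (Nat.choose (m + k - 1) (r + k - 1) : ℂ) *
          (z₀ - (starRingEnd ℂ) z₀) ^ (r + k / 2) * iteratedDeriv r f z₀ / (r.factorial : ℂ) :=
  fourierCoeffAt_eq_sum_deriv_general k hk12 f hf z₀ hz₀ m

end
end

section
/- Let k be an even integer and let f ∈ S_k(SL(2,ℤ)) be not identically zero. For z₀ ∈ ℍ let N(z₀) denote the order of the stabilizer of z₀ in PSL(2,ℤ) (so N(z₀) ∈ {1,2,3}, with N > 1 only at points SL(2,ℤ)-equivalent to i or to e^{2πi/3}). Then the set A_f ∩ ℍ = { z₀ ∈ ℍ : there exists n ∈ ℤ_{≥0} with n + k/2 ≡ 0 (mod N(z₀)) and c_{z₀}(f,n) = 0 }, regarded as a subset of ℂ, has Lebesgue measure zero. -/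
noncomputable section

open Complex Real MeasureTheory

/-
Expanding the weight-`k` slash of `f` by `σ_{z₀}` in a Taylor series shows that, up to a nonzero
factor, `c_{z₀}(f, n)` is `P_n(z₀) = ∑_{i ≤ n} a_i f⁽ⁱ⁾(z₀) (z₀ - z̄₀)ⁱ` with natural numbers `a_i`
such that `a_0 = 1` if `n = 0` and `a_1 > 0` if `n > 0`. Since `f ≠ 0` and `f → 0` at `i∞`,
neither `f` nor `f'` vanishes identically on `ℍ`, so for fixed `z` the polynomial
`t ↦ ∑ a_i f⁽ⁱ⁾(z) tⁱ` is nonzero. On the vertical line through `x`, `y ↦ P_n(x + iy)` extends to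
a holomorphic function of `y` on `Re y > 0`, which is therefore not identically zero for all but
finitely many `x`; its real zeros are then countable, and Fubini gives `P_n⁻¹(0) ∩ ℍ` measure zero.
-/

open Filter Topology Set ComplexConjugate
open UpperHalfPlane (upperHalfPlaneSet isOpen_upperHalfPlaneSet)

theorem finite_setOf_sum_mul_pow_eq_zero {R : Type*} [CommRing R] [IsDomain R] {b : ℕ → R}
    {n i : ℕ} (hi : i ≤ n) (hb : b i ≠ 0) :
    {t : R | ∑ j ∈ Finset.range (n + 1), b j * t ^ j = 0}.Finite := by
  set p : Polynomial R := ∑ j ∈ Finset.range (n + 1), Polynomial.C (b j) * Polynomial.X ^ j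
  have hp : p ≠ 0 := fun h => hb <| by
    simpa [p, Polynomial.finsetSum_coeff, Polynomial.coeff_C_mul_X_pow, Nat.lt_succ_iff.2 hi]
      using congrArg (Polynomial.coeff · i) h
  convert Polynomial.finite_setOfPred_isRoot hp using 3
  simp [p, Polynomial.eval_finsetSum]

theorem AnalyticOnNhd.countable_preimage_zero_inter {𝕜 E : Type*} [NontriviallyNormedField 𝕜]
    [SecondCountableTopology 𝕜] [NormedAddCommGroup E] [NormedSpace 𝕜 E] {f : 𝕜 → E}
    {U : Set 𝕜} (hf : AnalyticOnNhd 𝕜 f U) (hU : IsPreconnected U) (h : ¬ EqOn f 0 U) :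
    (f ⁻¹' {0} ∩ U).Countable :=
  (HereditarilyLindelofSpace.isLindelof _).countable_of_isDiscrete <|
    isDiscrete_of_codiscreteWithin <|
      (hf.eqOn_zero_or_eventually_ne_zero_of_preconnected hU).resolve_left h

theorem ContinuousOn.measurableSet_inter_preimage {α β : Type*} [TopologicalSpace α]
    [MeasurableSpace α] [OpensMeasurableSpace α] [TopologicalSpace β] {f : α → β} {s : Set α}
    {t : Set β} (hf : ContinuousOn f s) (hs : IsOpen s) (ht : IsClosed t) :
    MeasurableSet (s ∩ f ⁻¹' t) := by
  have : s ∩ f ⁻¹' t = s \ (s ∩ f ⁻¹' tᶜ) := by ext; simp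
  rw [this]
  exact hs.measurableSet.diff (hf.isOpen_inter_preimage hs ht.isOpen_compl).measurableSet

theorem Complex.volume_eq_zero_of_ae_volume_vertical_slice {S : Set ℂ} (hS : MeasurableSet S)
    (h : ∀ᵐ x : ℝ, volume {y : ℝ | (x + y * I : ℂ) ∈ S} = 0) : volume S = 0 := by
  set T := measurableEquivRealProd.symm ⁻¹' S
  have hT : MeasurableSet T := measurableEquivRealProd.symm.measurable hS
  have hST : measurableEquivRealProd ⁻¹' T = S :=
    measurableEquivRealProd.symm.symm_preimage_preimage S
  rw [← hST, volume_preserving_equiv_real_prod.measure_preimage hT.nullMeasurableSet,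
    Measure.volume_eq_prod, Measure.measure_prod_null hT]
  filter_upwards [h] with x hx
  simpa [T, preimage, mk_eq_add_mul_I] using hx

def derivPoly (c : ℕ → ℂ) (n : ℕ) (g : ℂ → ℂ) (z t : ℂ) : ℂ :=
  ∑ i ∈ Finset.range (n + 1), c i * deriv^[i] g z * t ^ i

section derivPoly

variable {g : ℂ → ℂ} {c : ℕ → ℂ} {n : ℕ}

theorem analyticAt_derivPoly_comp (hg : AnalyticOnNhd ℂ g upperHalfPlaneSet) {φ ψ : ℂ → ℂ}
    {v : ℂ} (hφ : AnalyticAt ℂ φ v) (hψ : AnalyticAt ℂ ψ v) (hv : 0 < (φ v).im) :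
    AnalyticAt ℂ (fun v => derivPoly c n g (φ v) (ψ v)) v :=
  Finset.analyticAt_fun_sum _ fun i _ =>
    (analyticAt_const.mul ((hg.iterated_deriv i _ hv).comp hφ)).mul (hψ.pow i)

theorem continuousOn_derivPoly_comp (hg : AnalyticOnNhd ℂ g upperHalfPlaneSet) {ψ : ℂ → ℂ}
    (hψ : Continuous ψ) :
    ContinuousOn (fun z => derivPoly c n g z (ψ z)) upperHalfPlaneSet :=
  continuousOn_finsetSum _ fun i _ =>
    (continuousOn_const.mul (hg.iterated_deriv i).continuousOn).mul (hψ.pow i).continuousOn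

theorem volume_setOf_derivPoly_eq_zero (hg : AnalyticOnNhd ℂ g upperHalfPlaneSet) {i : ℕ}
    (hi : i ≤ n) {w : ℂ} (hw : 0 < w.im) (hcw : c i * deriv^[i] g w ≠ 0) :
    volume {z : ℂ | 0 < z.im ∧ derivPoly c n g z (z - conj z) = 0} = 0 := by
  refine Complex.volume_eq_zero_of_ae_volume_vertical_slice
    ((continuousOn_derivPoly_comp hg (continuous_id.sub continuous_conj))
      |>.measurableSet_inter_preimage isOpen_upperHalfPlaneSet isClosed_singleton) ?_
  have hfin : {x : ℝ | derivPoly c n g w (2 * (w - x)) = 0}.Finite :=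
    (finite_setOf_sum_mul_pow_eq_zero hi hcw).preimage fun x _ y _ hxy => by simpa using hxy
  filter_upwards [measure_eq_zero_iff_ae_notMem.1 (hfin.countable.measure_zero volume)] with x hx
  -- `y ↦ P(x + yI)` extends holomorphically to `G` on `Re v > 0`; at the point `v` with
  -- `x + vI = w`, `G` takes the value `derivPoly c n g w (2 * (w - x))`, nonzero off `hfin`.
  set G : ℂ → ℂ := fun v => derivPoly c n g (x + v * I) (2 * v * I)
  have hG : AnalyticOnNhd ℂ G {v | 0 < v.re} := fun v hv =>
    analyticAt_derivPoly_comp hg (by fun_prop) (by fun_prop) (by simpa using hv)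
  have hGw : G (-(w - x) * I) ≠ 0 := by
    have h1 : (x : ℂ) + -(w - x) * I * I = w := by linear_combination (-(w - x)) * I_mul_I
    have h2 : 2 * (-(w - x) * I) * I = 2 * (w - x) := by
      linear_combination (-2 * (w - x)) * I_mul_I
    simpa only [G, h1, h2] using hx
  have hcount := hG.countable_preimage_zero_inter (convex_halfSpace_re_gt 0).isPreconnected
    fun h => hGw (h (by simpa using hw))
  refine measure_mono_null ?_ ((hcount.preimage ofReal_injective).measure_zero volume)
  rintro y ⟨hy, hPy⟩
  refine ⟨?_, by simpa using hy⟩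
  have : (x + y * I : ℂ) - conj (x + y * I) = 2 * y * I := by
    simp only [map_add, map_mul, conj_ofReal, conj_I]; ring
  rwa [this] at hPy

end derivPoly

/-- The coefficient of `(z₀ - z̄₀)ⁱ F⁽ⁱ⁾(z₀)` in the `n`-th derivative at `0` of
`(1 - w)⁻ᵐ F(σ_{z₀} w)`; for `i ≤ n` it equals `n! / i! * (n + m - 1).choose (n - i)`. -/
def slashTaylorCoeff : ℕ → ℕ → ℕ → ℕ
  | 0, _, i => if i = 0 then 1 else 0
  | n + 1, m, 0 => m * slashTaylorCoeff n (m + 1) 0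
  | n + 1, m, i + 1 => m * slashTaylorCoeff n (m + 1) (i + 1) + slashTaylorCoeff n (m + 2) i

theorem slashTaylorCoeff_eq_zero_of_lt {n m i : ℕ} (h : n < i) : slashTaylorCoeff n m i = 0 := by
  induction n generalizing m i with
  | zero => simp [slashTaylorCoeff, h.ne']
  | succ n ih =>
    obtain ⟨i, rfl⟩ : ∃ j, i = j + 1 := ⟨i - 1, by omega⟩
    simp [slashTaylorCoeff, ih (m := m + 1) (by omega : n < i + 1), ih (by omega : n < i)]

theorem slashTaylorCoeff_pos {n m i : ℕ} (hi : i ≤ n) (h : 0 < m ∨ 0 < i) :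
    0 < slashTaylorCoeff n m i := by
  induction n generalizing m i with
  | zero =>
    obtain rfl : i = 0 := by omega
    simp [slashTaylorCoeff]
  | succ n ih =>
    rcases i with _ | i
    · exact Nat.mul_pos (h.resolve_right (lt_irrefl 0)) (ih (Nat.zero_le _) (Or.inl m.succ_pos))
    · exact Nat.add_pos_right _ (ih (by omega) (Or.inl (by omega)))

theorem derivPoly_slashTaylorCoeff_succ (n m : ℕ) (F : ℂ → ℂ) (z t : ℂ) :
    m * derivPoly (slashTaylorCoeff n (m + 1) ·) n F z t
        + t * derivPoly (slashTaylorCoeff n (m + 2) ·) n (deriv F) z t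
      = derivPoly (slashTaylorCoeff (n + 1) m ·) (n + 1) F z t := by
  set g : ℕ → ℂ := fun i => slashTaylorCoeff n (m + 1) i * deriv^[i] F z * t ^ i
  have hshift : derivPoly (slashTaylorCoeff n (m + 1) ·) n F z t
      = ∑ i ∈ Finset.range (n + 1), g (i + 1) + g 0 := by
    rw [← Finset.sum_range_succ' g, Finset.sum_range_succ _ (n + 1)]
    simp [g, derivPoly, slashTaylorCoeff_eq_zero_of_lt]
  rw [hshift, derivPoly, derivPoly, Finset.sum_range_succ' _ (n + 1), mul_add, Finset.mul_sum,
    Finset.mul_sum, add_right_comm, ← Finset.sum_add_distrib]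
  congr 1
  · refine Finset.sum_congr rfl fun i _ => ?_
    simp only [g, slashTaylorCoeff, Function.iterate_succ_apply, Nat.cast_add, Nat.cast_mul]
    ring
  · simp only [g, slashTaylorCoeff, Nat.cast_mul]
    ring

def diskToUpper (z₀ w : ℂ) : ℂ := (z₀ - conj z₀ * w) / (1 - w)

def slashTerm (F : ℂ → ℂ) (z₀ : ℂ) (m : ℕ) (w : ℂ) : ℂ :=
  ((1 - w)⁻¹) ^ m * F (diskToUpper z₀ w)

theorem slashDisc_eq_const_mul_slashTerm (k : ℕ) (z₀ : ℂ) (f : ℂ → ℂ) :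
    slashDisc k z₀ f = fun w => (2 * I * z₀.im) ^ (k / 2) * slashTerm f z₀ k w := by
  ext w
  simp [slashDisc, slashTerm, diskToUpper, zpow_neg, inv_pow, mul_assoc]

section slashTerm

variable {F : ℂ → ℂ} {z₀ : ℂ}

theorem eventually_im_diskToUpper_pos (hz₀ : 0 < z₀.im) :
    ∀ᶠ w in 𝓝 0, 1 - w ≠ 0 ∧ 0 < (diskToUpper z₀ w).im := by
  have hcont : ContinuousAt (diskToUpper z₀) 0 :=
    ContinuousAt.div (by fun_prop) (by fun_prop) (by norm_num)
  exact ((continuous_const.sub continuous_id).continuousAt.eventually_ne (by norm_num)).and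
    (hcont.preimage_mem_nhds (isOpen_upperHalfPlaneSet.mem_nhds (by simpa [diskToUpper])))

theorem analyticAt_slashTerm (hF : AnalyticOnNhd ℂ F upperHalfPlaneSet) (hz₀ : 0 < z₀.im)
    (m : ℕ) : AnalyticAt ℂ (slashTerm F z₀ m) 0 := by
  have hF₀ : AnalyticAt ℂ F (diskToUpper z₀ 0) := hF _ (by simpa [diskToUpper] using hz₀)
  unfold slashTerm diskToUpper at *
  fun_prop (disch := norm_num)

theorem hasDerivAt_slashTerm {w : ℂ} (hw : 1 - w ≠ 0)
    (hF : DifferentiableAt ℂ F (diskToUpper z₀ w)) (m : ℕ) :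
    HasDerivAt (slashTerm F z₀ m)
      (m * slashTerm F z₀ (m + 1) w + (z₀ - conj z₀) * slashTerm (deriv F) z₀ (m + 2) w) w := by
  have hinv : HasDerivAt (fun w => (1 - w)⁻¹) ((1 - w)⁻¹ ^ 2) w :=
    (((hasDerivAt_id w).const_sub 1).fun_inv hw).congr_deriv (by simp)
  have hdisk : HasDerivAt (diskToUpper z₀) ((z₀ - conj z₀) * (1 - w)⁻¹ ^ 2) w := by
    refine ((((hasDerivAt_id w).const_mul (conj z₀)).const_sub z₀).div
      ((hasDerivAt_id w).const_sub 1) hw).congr_deriv ?_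
    simp only [id]
    field_simp
    ring
  refine ((hinv.fun_pow m).fun_mul (hF.hasDerivAt.comp w hdisk)).congr_deriv ?_
  rcases m with _ | m <;>
    simp only [slashTerm, Function.comp_apply, Nat.add_sub_cancel, Nat.cast_zero, Nat.cast_succ] <;>
    ring

theorem iteratedDeriv_slashTerm_zero (hF : AnalyticOnNhd ℂ F upperHalfPlaneSet)
    (hz₀ : 0 < z₀.im) (n m : ℕ) :
    iteratedDeriv n (slashTerm F z₀ m) 0
      = derivPoly (slashTaylorCoeff n m ·) n F z₀ (z₀ - conj z₀) := by
  induction n generalizing m F with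
  | zero => simp [derivPoly, slashTerm, diskToUpper, slashTaylorCoeff]
  | succ n ih =>
    have hderiv : deriv (slashTerm F z₀ m) =ᶠ[𝓝 0] fun w =>
        m * slashTerm F z₀ (m + 1) w + (z₀ - conj z₀) * slashTerm (deriv F) z₀ (m + 2) w := by
      filter_upwards [eventually_im_diskToUpper_pos hz₀] with w ⟨hw, hwF⟩
      exact (hasDerivAt_slashTerm hw (hF _ hwF).differentiableAt m).deriv
    have h₁ : ContDiffAt ℂ n (fun w => (m : ℂ) * slashTerm F z₀ (m + 1) w) 0 :=
      (analyticAt_const.mul (analyticAt_slashTerm hF hz₀ _)).contDiffAt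
    have h₂ : ContDiffAt ℂ n (fun w => (z₀ - conj z₀) * slashTerm (deriv F) z₀ (m + 2) w) 0 :=
      (analyticAt_const.mul (analyticAt_slashTerm hF.deriv hz₀ _)).contDiffAt
    rw [iteratedDeriv_succ', hderiv.iteratedDeriv_eq, iteratedDeriv_fun_add h₁ h₂,
      iteratedDeriv_const_mul_field, iteratedDeriv_const_mul_field, ih hF, ih hF.deriv,
      derivPoly_slashTaylorCoeff_succ]

end slashTerm

theorem fourierCoeffAt_eq_derivPoly (k : ℕ) {f : ℂ → ℂ} (hf : AnalyticOnNhd ℂ f upperHalfPlaneSet)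
    {z₀ : ℂ} (hz₀ : 0 < z₀.im) (n : ℕ) :
    fourierCoeffAt k z₀ f n = (2 * I * z₀.im) ^ (k / 2) / n.factorial
      * derivPoly (slashTaylorCoeff n k ·) n f z₀ (z₀ - conj z₀) := by
  rw [fourierCoeffAt, slashDisc_eq_const_mul_slashTerm, iteratedDeriv_const_mul_field,
    iteratedDeriv_slashTerm_zero hf hz₀]
  ring

theorem exists_deriv_ne_zero_of_tendsto_zero {f : ℂ → ℂ}
    (hf : DifferentiableOn ℂ f upperHalfPlaneSet)
    (hlim : Tendsto (fun y : ℝ => f (y * I)) atTop (𝓝 0)) {z : ℂ} (hz : 0 < z.im)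
    (hfz : f z ≠ 0) : ∃ w, 0 < w.im ∧ deriv f w ≠ 0 := by
  by_contra! h
  have hconst : ∀ y : ℝ, 0 < y → f (y * I) = f z := fun y hy =>
    isOpen_upperHalfPlaneSet.is_const_of_deriv_eq_zero (convex_halfSpace_im_gt 0).isPreconnected
      hf h (by simpa) hz
  exact hfz <| tendsto_nhds_unique
    (tendsto_const_nhds.congr' ((eventually_gt_atTop 0).mono fun y hy => (hconst y hy).symm)) hlim

theorem IsCuspForm.tendsto_mul_I {k : ℕ} {f : ℂ → ℂ} (hf : IsCuspForm k f) :
    Tendsto (fun y : ℝ => f (y * I)) atTop (𝓝 0) := by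
  refine Metric.tendsto_atTop.2 fun ε hε => ?_
  obtain ⟨Y, hY⟩ := hf.2.2 ε hε
  exact ⟨Y + 1, fun y hy => by simpa using hY 0 y (by linarith)⟩

theorem measure_vanishing_set_eq_zero_general (k : ℕ) (f : ℂ → ℂ)
    (hf : IsCuspForm k f) (hne : ∃ z : ℂ, 0 < z.im ∧ f z ≠ 0) :
    volume {z₀ : ℂ | 0 < z₀.im ∧
      ∃ n : ℕ, stabOrder z₀ ∣ (n + k / 2) ∧ fourierCoeffAt k z₀ f n = 0} = 0 := by
  have hdiff : DifferentiableOn ℂ f upperHalfPlaneSet := fun z hz =>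
    (hf.1 z hz).differentiableWithinAt
  have hana := hdiff.analyticOnNhd isOpen_upperHalfPlaneSet
  obtain ⟨z₁, hz₁, hfz₁⟩ := hne
  obtain ⟨z₂, hz₂, hf'z₂⟩ := exists_deriv_ne_zero_of_tendsto_zero hdiff hf.tendsto_mul_I hz₁ hfz₁
  refine measure_mono_null (t := ⋃ n, {z | 0 < z.im ∧
    derivPoly (slashTaylorCoeff n k ·) n f z (z - conj z) = 0}) ?_ (measure_iUnion_null fun n => ?_)
  · rintro z₀ ⟨hz₀, n, -, hc⟩
    rw [fourierCoeffAt_eq_derivPoly k hana hz₀] at hc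
    refine mem_iUnion.2 ⟨n, hz₀, (mul_eq_zero.1 hc).resolve_left ?_⟩
    have : (z₀.im : ℂ) ≠ 0 := ofReal_ne_zero.2 hz₀.ne'
    simp [this, Nat.factorial_ne_zero]
  · rcases n.eq_zero_or_pos with rfl | hn
    · exact volume_setOf_derivPoly_eq_zero hana le_rfl hz₁ (by simpa [slashTaylorCoeff])
    · refine volume_setOf_derivPoly_eq_zero hana hn hz₂ (mul_ne_zero ?_ hf'z₂)
      exact_mod_cast (slashTaylorCoeff_pos hn (Or.inr one_pos)).ne'

/-- the set of points of `ℍ` where some non-trivial Fourier coefficient of a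
nonzero cusp form vanishes has Lebesgue measure zero. -/
theorem measure_vanishing_set_eq_zero (k : ℕ) (hk : Even k) (f : ℂ → ℂ)
    (hf : IsCuspForm k f) (hne : ∃ z : ℂ, 0 < z.im ∧ f z ≠ 0) :
    volume {z₀ : ℂ | 0 < z₀.im ∧
      ∃ n : ℕ, stabOrder z₀ ∣ (n + k / 2) ∧ fourierCoeffAt k z₀ f n = 0} = 0 :=
  measure_vanishing_set_eq_zero_general k f hf hne

end
end

section
/- Let K be a number field with ring of integers 𝓞_K, let a₁,a₂,a₃,a₄ ∈ 𝓞_K[t], let q_n ∈ 𝓞_K[t] be given by the recursion, and let l ∈ ℤ_{≥1}. Then the sequence of constant terms q_m(0) modulo l𝓞_K is eventually periodic; more precisely, there exist integers α ≥ 0 and β ≥ 1 with α + β ≤ l · |𝓞_K/l𝓞_K|^{2l} such that q_{m+β}(0) ≡ q_m(0) (mod l𝓞_K) for all m ≥ α. -/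
noncomputable section

open Complex Real MeasureTheory

/-
The constant term of `q_m` modulo `l` only depends on the coefficients of `q_m` below `t^l`
modulo `l`, and these evolve by a closed recursion: `q_{n+2}` modulo `(l, t^l)` is determined
by `q_{n+1}` and `q_n` modulo `(l, t^l)` and by `n` modulo `l`, because differentiation
preserves divisibility by `t^l` once `l = 0`. The state `(n mod l, q_n, q_{n+1})` thus ranges
over a set of `l · |𝓞_K/l𝓞_K|^{2l}` elements and, by the pigeonhole principle, becomes
periodic within that many steps.
-/

open Polynomial

section Recursion

variable {R S : Type*} [CommRing R] [CommRing S]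

theorem map_qrec (f : R →+* S) (a₁ a₂ a₃ a₄ : R[X]) (n : ℕ) :
    (qrec a₁ a₂ a₃ a₄ n).map f = qrec (a₁.map f) (a₂.map f) (a₃.map f) (a₄.map f) n := by
  induction n using Nat.twoStepInduction with
  | zero => simp [qrec]
  | one => simp [qrec]
  | more n ih₀ ih₁ =>
    simp only [qrec, Polynomial.map_add, Polynomial.map_mul, Polynomial.map_natCast,
      Polynomial.map_one, Polynomial.map_ofNat, ← derivative_map, ih₀, ih₁]

theorem X_pow_dvd_derivative {l : ℕ} (hl : (l : S) = 0) {p : S[X]} (hp : X ^ l ∣ p) :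
    X ^ l ∣ derivative p := by
  obtain ⟨q, rfl⟩ := hp
  rw [derivative_mul, derivative_X_pow, hl, C_0, zero_mul, zero_mul, zero_add]
  exact dvd_mul_right _ _

theorem X_pow_dvd_qrec_sub_of_dvd {l : ℕ} (hl : (l : S) = 0) (a₁ a₂ a₃ a₄ : S[X]) {n m : ℕ}
    (hnm : (n : S) = m) (h₀ : X ^ l ∣ qrec a₁ a₂ a₃ a₄ n - qrec a₁ a₂ a₃ a₄ m)
    (h₁ : X ^ l ∣ qrec a₁ a₂ a₃ a₄ (n + 1) - qrec a₁ a₂ a₃ a₄ (m + 1)) :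
    X ^ l ∣ qrec a₁ a₂ a₃ a₄ (n + 2) - qrec a₁ a₂ a₃ a₄ (m + 2) := by
  have hcast : (n : S[X]) = m := by rw [← map_natCast C, hnm, map_natCast]
  set A : S[X] := a₁ + ((m : S[X]) + 1) * a₂
  set B : S[X] := ((m : S[X]) + 1) * ((m : S[X]) + 12) * a₄
  have hsplit : qrec a₁ a₂ a₃ a₄ (n + 2) - qrec a₁ a₂ a₃ a₄ (m + 2) =
      A * (qrec a₁ a₂ a₃ a₄ (n + 1) - qrec a₁ a₂ a₃ a₄ (m + 1))
        + a₃ * derivative (qrec a₁ a₂ a₃ a₄ (n + 1) - qrec a₁ a₂ a₃ a₄ (m + 1))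
        + B * (qrec a₁ a₂ a₃ a₄ n - qrec a₁ a₂ a₃ a₄ m) := by
    rw [qrec, qrec, hcast, derivative_sub]
    ring
  rw [hsplit]
  exact dvd_add (dvd_add (dvd_mul_of_dvd_right h₁ _)
    (dvd_mul_of_dvd_right (X_pow_dvd_derivative hl h₁) _)) (dvd_mul_of_dvd_right h₀ _)

end Recursion

theorem exists_periodic_of_succ_eq_succ {α : Type*} [Finite α] (s : ℕ → α)
    (hs : ∀ n m, s n = s m → s (n + 1) = s (m + 1)) :
    ∃ a b, 1 ≤ b ∧ a + b ≤ Nat.card α ∧ ∀ m, a ≤ m → s (m + b) = s m := by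
  have := Fintype.ofFinite α
  obtain ⟨i, j, hne, hij⟩ := Fintype.exists_ne_map_eq_of_card_lt
    (fun k : Fin (Nat.card α + 1) => s k) (by simp [Nat.card_eq_fintype_card])
  wlog hlt : i < j generalizing i j
  · exact this j i hne.symm hij.symm (lt_of_le_of_ne (not_lt.mp hlt) hne.symm)
  have hshift : ∀ d, s (i + d) = s (j + d) := fun d => by
    induction d with
    | zero => exact hij
    | succ d ih => exact hs _ _ ih
  refine ⟨i, j - i, by omega, by omega, fun m hm => ?_⟩
  have := hshift (m - i)
  rw [Nat.add_sub_cancel' hm] at this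
  rw [this, show m + (j - i) = j + (m - i) by omega]

section Truncation

variable {S : Type*} [CommRing S]

def coeffsBelow (l : ℕ) (p : S[X]) : Fin l → S := fun i => p.coeff i

theorem coeffsBelow_eq_iff {l : ℕ} {p q : S[X]} :
    coeffsBelow l p = coeffsBelow l q ↔ X ^ l ∣ p - q := by
  simp only [coeffsBelow, X_pow_dvd_iff, coeff_sub, sub_eq_zero, funext_iff, Fin.forall_iff]

def qrecState (l : ℕ) (a₁ a₂ a₃ a₄ : S[X]) (n : ℕ) : ZMod l × (Fin l → S) × (Fin l → S) :=
  (n, coeffsBelow l (qrec a₁ a₂ a₃ a₄ n), coeffsBelow l (qrec a₁ a₂ a₃ a₄ (n + 1)))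

theorem qrecState_succ_eq_of_eq {l : ℕ} (hl : (l : S) = 0) (a₁ a₂ a₃ a₄ : S[X]) {n m : ℕ}
    (h : qrecState l a₁ a₂ a₃ a₄ n = qrecState l a₁ a₂ a₃ a₄ m) :
    qrecState l a₁ a₂ a₃ a₄ (n + 1) = qrecState l a₁ a₂ a₃ a₄ (m + 1) := by
  simp only [qrecState, Prod.mk.injEq, coeffsBelow_eq_iff] at h ⊢
  obtain ⟨hnm, h₀, h₁⟩ := h
  have hnm' : (n : S) = m := by
    simpa using congrArg (ZMod.castHom (ringChar.dvd hl) S) hnm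
  exact ⟨by push_cast; rw [hnm], h₁, X_pow_dvd_qrec_sub_of_dvd hl a₁ a₂ a₃ a₄ hnm' h₀ h₁⟩

theorem exists_X_pow_dvd_qrec_sub [Finite S] {l : ℕ} [NeZero l] (hl : (l : S) = 0)
    (a₁ a₂ a₃ a₄ : S[X]) :
    ∃ α β, 1 ≤ β ∧ α + β ≤ l * Nat.card S ^ (2 * l) ∧
      ∀ m, α ≤ m → X ^ l ∣ qrec a₁ a₂ a₃ a₄ (m + β) - qrec a₁ a₂ a₃ a₄ m := by
  obtain ⟨α, β, hβ, hle, hper⟩ := exists_periodic_of_succ_eq_succ (qrecState l a₁ a₂ a₃ a₄)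
    fun n m => qrecState_succ_eq_of_eq hl a₁ a₂ a₃ a₄
  have hcard : Nat.card (ZMod l × (Fin l → S) × (Fin l → S)) = l * Nat.card S ^ (2 * l) := by
    simp only [Nat.card_prod, Nat.card_zmod, Nat.card_fun, Nat.card_fin, two_mul, pow_add]
  refine ⟨α, β, hβ, hcard ▸ hle, fun m hm => ?_⟩
  exact coeffsBelow_eq_iff.mp (congrArg (fun s => s.2.1) (hper m hm))

end Truncation

/-- Theorem 6.1 of the paper, eventual periodicity of `q_m(0)` mod `l 𝓞_K`. -/
theorem qrec_coeff_zero_eventually_periodic (K : Type*) [Field K] [NumberField K]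
    (a₁ a₂ a₃ a₄ : Polynomial (NumberField.RingOfIntegers K)) (l : ℕ) (hl : 1 ≤ l) :
    ∃ α β : ℕ, 1 ≤ β ∧
      α + β ≤ l * (Nat.card (NumberField.RingOfIntegers K ⧸
        Ideal.span {(l : NumberField.RingOfIntegers K)})) ^ (2 * l) ∧
      ∀ m : ℕ, α ≤ m → (l : NumberField.RingOfIntegers K) ∣
        ((qrec a₁ a₂ a₃ a₄ (m + β)).coeff 0 - (qrec a₁ a₂ a₃ a₄ m).coeff 0) := by
  set I := Ideal.span {(l : NumberField.RingOfIntegers K)}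
  have : NeZero l := ⟨by omega⟩
  have : Finite (NumberField.RingOfIntegers K ⧸ I) := I.finiteQuotientOfFreeOfNeBot
    (by simpa [I, Ideal.span_singleton_eq_bot] using NeZero.ne l)
  set mk := Ideal.Quotient.mk I
  have hl₀ : (l : NumberField.RingOfIntegers K ⧸ I) = 0 := by
    rw [← map_natCast mk, Ideal.Quotient.eq_zero_iff_mem]
    exact Ideal.mem_span_singleton_self _
  obtain ⟨α, β, hβ, hle, hper⟩ :=
    exists_X_pow_dvd_qrec_sub hl₀ (a₁.map mk) (a₂.map mk) (a₃.map mk) (a₄.map mk)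
  refine ⟨α, β, hβ, hle, fun m hm => ?_⟩
  have h := X_pow_dvd_iff.mp (hper m hm) 0 (NeZero.pos l)
  rwa [← map_qrec, ← map_qrec, ← Polynomial.map_sub, coeff_map, coeff_sub,
    Ideal.Quotient.eq_zero_iff_mem, Ideal.mem_span_singleton] at h

end
end

section
/- Let K be a number field with ring of integers 𝓞_K, let a₁,a₂,a₃,a₄ ∈ 𝓞_K[t], let q_n ∈ 𝓞_K[t] be given by the recursion, and let l > 2 be a prime. Suppose there are integers α ≥ 0 and β ≥ 1 with l ∤ β such that q_{n+β} ≡ q_n modulo the ideal (l, t^l) of 𝓞_K[t] for all n ≥ α. Then a₂(t)·q_n(t) ≡ 0 (mod (l, t^l)) and a₄(t)·q_n(t) ≡ 0 (mod (l, t^l)) for all n > α. -/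
noncomputable section

open Complex Real MeasureTheory

/-!
Subtracting the recursion at `n` from the recursion at `n + s`, and using that the ideal
`(l, t^l)` is stable under `d/dt`, periodicity with period `s` from `k` on gives
`s·a₂q_{k+1} + s(2k+13+s)·a₄q_k ≡ 0`. Taking `s = β` and `s = 2β` and eliminating leaves
`2β²·a₄q_k ≡ 0` and then `β·a₂q_{k+1} ≡ 0`; as `2β` is invertible modulo `l`, the claim follows.
-/

open Polynomial

theorem Polynomial.derivative_mem_span_C_X_pow {R : Type*} [CommRing R] {l : ℕ} {p : R[X]}
    (hp : p ∈ Ideal.span {C (l : R), X ^ l}) :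
    derivative p ∈ Ideal.span {C (l : R), X ^ l} := by
  rw [Ideal.mem_span_pair] at hp ⊢
  obtain ⟨u, v, rfl⟩ := hp
  refine ⟨derivative u + v * X ^ (l - 1), derivative v, ?_⟩
  simp only [derivative_add, derivative_mul, derivative_C, derivative_X_pow, mul_zero, add_zero]
  ring

theorem Ideal.mem_of_natCast_mul_mem {S : Type*} [CommRing S] {I : Ideal S} {l c : ℕ}
    (hl : l.Prime) (hlI : (l : S) ∈ I) (hc : ¬ l ∣ c) {p : S} (h : (c : S) * p ∈ I) : p ∈ I := by
  obtain ⟨u, v, huv⟩ := ((Nat.coprime_comm.mp ((Nat.Prime.coprime_iff_not_dvd hl).mpr hc)).cast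
    (R := S)).symm
  rw [← one_mul p, ← huv, add_mul, mul_assoc, mul_assoc]
  exact add_mem (I.mul_mem_left _ (I.mul_mem_right _ hlI)) (I.mul_mem_left _ h)

theorem Ideal.add_mul_sub_mem_of_add_sub_mem {S : Type*} [CommRing S] {I : Ideal S}
    {f : ℕ → S} {α β : ℕ} (h : ∀ n, α ≤ n → f (n + β) - f n ∈ I) (m : ℕ) :
    ∀ n, α ≤ n → f (n + m * β) - f n ∈ I := by
  induction m with
  | zero => simp
  | succ m ih =>
    intro n hn
    have hstep := h (n + m * β) (hn.trans (Nat.le_add_right _ _))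
    rw [add_mul, one_mul, ← add_assoc, ← sub_add_sub_cancel _ (f (n + m * β))]
    exact add_mem hstep (ih n hn)

section qrec

variable {R : Type*} [CommRing R] (a₁ a₂ a₃ a₄ : R[X]) {I : Ideal R[X]}

theorem qrec_periodic_combination_mem (hder : ∀ p ∈ I, derivative p ∈ I) {k s : ℕ}
    (hper : ∀ n, k ≤ n → qrec a₁ a₂ a₃ a₄ (n + s) - qrec a₁ a₂ a₃ a₄ n ∈ I) :
    (s : R[X]) * (a₂ * qrec a₁ a₂ a₃ a₄ (k + 1))
      + (s : R[X]) * (2 * k + 13 + s) * (a₄ * qrec a₁ a₂ a₃ a₄ k) ∈ I := by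
  set q := qrec a₁ a₂ a₃ a₄
  have h0 : q (k + s) - q k ∈ I := hper k le_rfl
  have h1 : q (k + 1 + s) - q (k + 1) ∈ I := hper (k + 1) (by omega)
  have h2 : q (k + 2 + s) - q (k + 2) ∈ I := hper (k + 2) (by omega)
  have h1' : derivative (q (k + 1 + s)) - derivative (q (k + 1)) ∈ I := by
    simpa only [derivative_sub] using hder _ h1
  have key : (s : R[X]) * (a₂ * q (k + 1)) + (s : R[X]) * (2 * k + 13 + s) * (a₄ * q k)
      = (q (k + 2 + s) - q (k + 2))
        - (a₁ + (k + s + 1) * a₂) * (q (k + 1 + s) - q (k + 1))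
        - a₃ * (derivative (q (k + 1 + s)) - derivative (q (k + 1)))
        - (k + s + 1) * (k + s + 12) * a₄ * (q (k + s) - q k) := by
    rw [show k + 2 + s = (k + s) + 2 by omega, show k + 1 + s = (k + s) + 1 by omega]
    simp only [q, qrec]
    push_cast
    ring
  rw [key]
  exact sub_mem (sub_mem (sub_mem h2 (I.mul_mem_left _ h1)) (I.mul_mem_left _ h1'))
    (I.mul_mem_left _ h0)

theorem qrec_mul_mem_of_periodic_of_derivative_mem (hder : ∀ p ∈ I, derivative p ∈ I)
    {l : ℕ} (hl : l.Prime) (hl2 : l ≠ 2) (hlI : (l : R[X]) ∈ I) {α β : ℕ} (hlβ : ¬ l ∣ β)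
    (hper : ∀ n, α ≤ n → qrec a₁ a₂ a₃ a₄ (n + β) - qrec a₁ a₂ a₃ a₄ n ∈ I)
    (k : ℕ) (hk : α ≤ k) :
    a₄ * qrec a₁ a₂ a₃ a₄ k ∈ I ∧ a₂ * qrec a₁ a₂ a₃ a₄ (k + 1) ∈ I := by
  set q := qrec a₁ a₂ a₃ a₄
  have hperk (m : ℕ) : ∀ n, k ≤ n → q (n + m * β) - q n ∈ I := fun n hn =>
    Ideal.add_mul_sub_mem_of_add_sub_mem hper m n (hk.trans hn)
  have S₁ := qrec_periodic_combination_mem a₁ a₂ a₃ a₄ hder (by simpa using hperk 1)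
  have S₂ := qrec_periodic_combination_mem a₁ a₂ a₃ a₄ hder (hperk 2)
  have hl2' : ¬ l ∣ 2 := (Nat.prime_dvd_prime_iff_eq hl Nat.prime_two).not.mpr hl2
  have h₄ : a₄ * q k ∈ I := by
    have h : ((2 : ℕ) : R[X]) * ((β : R[X]) * ((β : R[X]) * (a₄ * q k))) ∈ I := by
      convert sub_mem S₂ (I.mul_mem_left 2 S₁) using 1
      push_cast
      ring
    exact Ideal.mem_of_natCast_mul_mem hl hlI hlβ <|
      Ideal.mem_of_natCast_mul_mem hl hlI hlβ <| Ideal.mem_of_natCast_mul_mem hl hlI hl2' h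
  refine ⟨h₄, Ideal.mem_of_natCast_mul_mem hl hlI hlβ ?_⟩
  convert sub_mem S₁ (I.mul_mem_left ((β : R[X]) * (2 * k + 13 + β)) h₄) using 1
  ring

end qrec

theorem qrec_mul_mem_of_periodic_general (K : Type*) [Field K]
    (a₁ a₂ a₃ a₄ : Polynomial (NumberField.RingOfIntegers K))
    (l : ℕ) (hl : l.Prime) (hl2 : 2 < l) (α β : ℕ) (hlβ : ¬ l ∣ β)
    (hper : ∀ n : ℕ, α ≤ n →
      qrec a₁ a₂ a₃ a₄ (n + β) - qrec a₁ a₂ a₃ a₄ n ∈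
        Ideal.span ({Polynomial.C (l : NumberField.RingOfIntegers K), Polynomial.X ^ l}
          : Set (Polynomial (NumberField.RingOfIntegers K)))) :
    ∀ n : ℕ, α < n →
      a₂ * qrec a₁ a₂ a₃ a₄ n ∈
        Ideal.span ({Polynomial.C (l : NumberField.RingOfIntegers K), Polynomial.X ^ l}
          : Set (Polynomial (NumberField.RingOfIntegers K))) ∧
      a₄ * qrec a₁ a₂ a₃ a₄ n ∈
        Ideal.span ({Polynomial.C (l : NumberField.RingOfIntegers K), Polynomial.X ^ l}
          : Set (Polynomial (NumberField.RingOfIntegers K))) := by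
  have hlI : (l : Polynomial (NumberField.RingOfIntegers K)) ∈
      Ideal.span {Polynomial.C (l : NumberField.RingOfIntegers K), Polynomial.X ^ l} := by
    rw [← map_natCast Polynomial.C]
    exact Ideal.subset_span (Set.mem_insert _ _)
  have key := qrec_mul_mem_of_periodic_of_derivative_mem a₁ a₂ a₃ a₄
    (fun _ => Polynomial.derivative_mem_span_C_X_pow) hl hl2.ne' hlI hlβ hper
  intro n hn
  obtain ⟨k, rfl⟩ : ∃ k, n = k + 1 := ⟨n - 1, by omega⟩
  exact ⟨(key k (Nat.le_of_lt_succ hn)).2, (key (k + 1) hn.le).1⟩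

/-- Lemma 6.8 of the paper. -/
theorem qrec_mul_mem_of_periodic (K : Type*) [Field K] [NumberField K]
    (a₁ a₂ a₃ a₄ : Polynomial (NumberField.RingOfIntegers K))
    (l : ℕ) (hl : l.Prime) (hl2 : 2 < l) (α β : ℕ) (hβ : 1 ≤ β) (hlβ : ¬ l ∣ β)
    (hper : ∀ n : ℕ, α ≤ n →
      qrec a₁ a₂ a₃ a₄ (n + β) - qrec a₁ a₂ a₃ a₄ n ∈
        Ideal.span ({Polynomial.C (l : NumberField.RingOfIntegers K), Polynomial.X ^ l}
          : Set (Polynomial (NumberField.RingOfIntegers K)))) :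
    ∀ n : ℕ, α < n →
      a₂ * qrec a₁ a₂ a₃ a₄ n ∈
        Ideal.span ({Polynomial.C (l : NumberField.RingOfIntegers K), Polynomial.X ^ l}
          : Set (Polynomial (NumberField.RingOfIntegers K))) ∧
      a₄ * qrec a₁ a₂ a₃ a₄ n ∈
        Ideal.span ({Polynomial.C (l : NumberField.RingOfIntegers K), Polynomial.X ^ l}
          : Set (Polynomial (NumberField.RingOfIntegers K))) :=
  qrec_mul_mem_of_periodic_general K a₁ a₂ a₃ a₄ l hl hl2 α β hlβ hper

end
end

section
/- For every m ∈ ℤ_{≥0}, the function 𝓔_m satisfies lim_{y→∞} 𝓔_m(x+iy) = 12^m uniformly in x ∈ ℝ; that is, for every ε > 0 there exists Y > 0 such that |𝓔_m(x+iy) − 12^m| < ε for all x ∈ ℝ and all y > Y. -/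
noncomputable section

open Complex Real MeasureTheory

/-!
As `y → ∞`, the `q`-series in `E₂*`, `E₄`, `E₆` tend to `0` uniformly in `x` by dominated
convergence, and so does `3 / (π y)`; hence `𝓔_m(x + iy)` tends to
`∑ᵣ (m!/r!) C(m+11, r+11) 𝓑ᵣ(1, 1)`, and it remains to show that this sum is `12^m`.

Substituting `Q = t²`, `R = t³` turns the derivation `-4R ∂_Q - 6Q² ∂_R` into `-2t² d/dt`, so
`𝓑ᵣ(t², t³) = bᵣ tʳ` with `b_{r+1} = -2r bᵣ - r(r+11) b_{r-1}` and `bᵣ = 𝓑ᵣ(1, 1)`.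
With `aᵣ = bᵣ / (r! (r+11)!)`, the sum is `m! (m+11)!` times the `m`-th coefficient of
`F = eˣ A`, `A = ∑ aᵣ xʳ`. The recurrence says `θ(θ+11)A + 2xθA + x²A = 0` for `θ = x d/dx`, and
since `e⁻ˣ θ eˣ = θ + x` this becomes `θ(θ+11)F = 12xF`, i.e. the sum grows by a factor `12`
from `m` to `m + 1`.
-/

open Finset
open scoped Nat

def expConv {K : Type*} [Field K] (a : ℕ → K) (m : ℕ) : K :=
  ∑ p ∈ antidiagonal m, a p.1 / (p.2 ! : K)

section ExpConv

variable {K : Type*} [Field K] [CharZero K]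

lemma sum_antidiagonal_succ_snd_mul_div_factorial (g : ℕ × ℕ → K) (n : ℕ) :
    ∑ p ∈ antidiagonal (n + 1), (p.2 : K) * g p / (p.2 ! : K) =
      ∑ p ∈ antidiagonal n, g (p.1, p.2 + 1) / (p.2 ! : K) := by
  rw [Nat.sum_antidiagonal_succ']
  simp only [Nat.cast_zero, zero_mul, zero_div, zero_add, Nat.factorial_succ, Nat.cast_mul]
  refine sum_congr rfl fun p _ => ?_
  have : (p.2 ! : K) ≠ 0 := Nat.cast_ne_zero.mpr p.2.factorial_ne_zero
  have : (p.2 : K) + 1 ≠ 0 := by exact_mod_cast p.2.succ_ne_zero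
  push_cast
  field_simp

lemma expConv_succ_succ (k : K) {a : ℕ → K} (ha₁ : a 1 = 0)
    (hrec : ∀ i : ℕ, (i + 2) * (i + 2 + k) * a (i + 2) + 2 * (i + 1) * a (i + 1) + a i = 0)
    (m : ℕ) :
    (m + 2) * (m + 2 + k) * expConv a (m + 2) = (k + 1) * expConv a (m + 1) := by
  have hsplit : (m + 2) * (m + 2 + k) * expConv a (m + 2) =
      ∑ p ∈ antidiagonal (m + 2), (p.1 : K) * (p.1 + k) * a p.1 / (p.2 ! : K) +
      ∑ p ∈ antidiagonal (m + 2), (p.2 : K) * ((2 * p.1 + p.2 + k) * a p.1) / (p.2 ! : K) := by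
    rw [expConv, mul_sum, ← sum_add_distrib]
    refine sum_congr rfl fun p hp => ?_
    have hp : (p.1 : K) + p.2 = m + 2 := by exact_mod_cast mem_antidiagonal.mp hp
    rw [← hp]
    ring
  have hquad : ∑ p ∈ antidiagonal (m + 2), (p.1 : K) * (p.1 + k) * a p.1 / (p.2 ! : K) =
      ∑ p ∈ antidiagonal m, (p.1 + 2) * (p.1 + 2 + k) * a (p.1 + 2) / (p.2 ! : K) := by
    rw [Nat.sum_antidiagonal_succ, Nat.sum_antidiagonal_succ]
    simp only [ha₁]
    push_cast
    ring_nf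
  have hlin :
      ∑ p ∈ antidiagonal (m + 2), (p.2 : K) * ((2 * p.1 + p.2 + k) * a p.1) / (p.2 ! : K) =
      (k + 1) * expConv a (m + 1) + ∑ p ∈ antidiagonal (m + 1), 2 * p.1 * a p.1 / (p.2 ! : K) +
        ∑ p ∈ antidiagonal (m + 1), (p.2 : K) * a p.1 / (p.2 ! : K) := by
    rw [sum_antidiagonal_succ_snd_mul_div_factorial, expConv, mul_sum, ← sum_add_distrib,
      ← sum_add_distrib]
    refine sum_congr rfl fun p _ => ?_
    push_cast
    ring
  have hlin_fst : ∑ p ∈ antidiagonal (m + 1), 2 * p.1 * a p.1 / (p.2 ! : K) =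
      ∑ p ∈ antidiagonal m, 2 * (p.1 + 1) * a (p.1 + 1) / (p.2 ! : K) := by
    rw [Nat.sum_antidiagonal_succ]
    push_cast
    ring_nf
  have hlin_snd : ∑ p ∈ antidiagonal (m + 1), (p.2 : K) * a p.1 / (p.2 ! : K) = expConv a m :=
    sum_antidiagonal_succ_snd_mul_div_factorial (fun p => a p.1) m
  have hcancel :
      ∑ p ∈ antidiagonal m, (p.1 + 2) * (p.1 + 2 + k) * a (p.1 + 2) / (p.2 ! : K) +
        ∑ p ∈ antidiagonal m, 2 * (p.1 + 1) * a (p.1 + 1) / (p.2 ! : K) + expConv a m = 0 := by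
    rw [expConv, ← sum_add_distrib, ← sum_add_distrib]
    exact sum_eq_zero fun p _ => by rw [← add_div, ← add_div, hrec, zero_div]
  rw [hsplit, hquad, hlin, hlin_fst, hlin_snd]
  linear_combination hcancel

lemma expConv_succ (k : K) {a : ℕ → K} (ha₁ : a 1 = 0)
    (hrec : ∀ i : ℕ, (i + 2) * (i + 2 + k) * a (i + 2) + 2 * (i + 1) * a (i + 1) + a i = 0)
    (m : ℕ) :
    (m + 1) * (m + 1 + k) * expConv a (m + 1) = (k + 1) * expConv a m := by
  cases m with
  | zero =>
    simp [expConv, Nat.sum_antidiagonal_succ, ha₁, add_comm]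
  | succ m =>
    push_cast
    linear_combination expConv_succ_succ k ha₁ hrec m

lemma Nat.cast_factorial_div_mul_choose (k : ℕ) {m r : ℕ} (hr : r ≤ m) :
    ((m ! / r ! : ℕ) : K) * ((m + k).choose (r + k) : K) =
      m ! * (m + k)! / (r ! * (r + k)! * (m - r)! : K) := by
  have hne (n : ℕ) : (n ! : K) ≠ 0 := Nat.cast_ne_zero.mpr n.factorial_ne_zero
  rw [Nat.cast_div (Nat.factorial_dvd_factorial hr) (hne r),
    Nat.cast_choose K (by omega : r + k ≤ m + k), Nat.add_sub_add_right]
  field_simp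

lemma sum_factorial_div_mul_choose_eq_expConv (k : ℕ) (b : ℕ → K) (m : ℕ) :
    ∑ r ∈ range (m + 1), ((m ! / r ! : ℕ) : K) * ((m + k).choose (r + k) : K) * b r =
      m ! * (m + k)! * expConv (fun i => b i / (i ! * (i + k)! : K)) m := by
  rw [expConv, Nat.sum_antidiagonal_eq_sum_range_succ (fun i j => b i / (i ! * (i + k)! : K) / j !),
    mul_sum]
  refine sum_congr rfl fun r hr => ?_
  rw [Nat.cast_factorial_div_mul_choose k (Nat.lt_succ_iff.mp (mem_range.mp hr))]
  ring

lemma recurrence_of_eq_factorial_mul (k : ℕ) {a b : ℕ → K}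
    (hab : ∀ n, b n = n ! * (n + k)! * a n)
    (hrec : ∀ i : ℕ, b (i + 2) = -2 * (i + 1) * b (i + 1) - (i + 1) * (i + 1 + k) * b i)
    (i : ℕ) :
    (i + 2) * (i + 2 + k) * a (i + 2) + 2 * (i + 1) * a (i + 1) + a i = 0 := by
  have hfac : ((i + 1)! * (i + 1 + k)! : K) ≠ 0 :=
    mul_ne_zero (Nat.cast_ne_zero.mpr (Nat.factorial_ne_zero _))
      (Nat.cast_ne_zero.mpr (Nat.factorial_ne_zero _))
  refine (mul_eq_zero.mp ?_).resolve_left hfac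
  have h := hrec i
  rw [hab, hab (i + 1), hab i, show i + 2 + k = i + 1 + k + 1 by omega,
    show i + 1 + k = i + k + 1 by omega, Nat.factorial_succ (i + 1), Nat.factorial_succ i,
    Nat.factorial_succ (i + k + 1), Nat.factorial_succ (i + k)] at h
  rw [show i + 1 + k = i + k + 1 by omega, Nat.factorial_succ i, Nat.factorial_succ (i + k)]
  push_cast at h ⊢
  linear_combination h

theorem sum_factorial_div_mul_choose_mul_eq_pow (k : ℕ) {b : ℕ → K} (hb₁ : b 1 = 0)
    (hrec : ∀ i : ℕ, b (i + 2) = -2 * (i + 1) * b (i + 1) - (i + 1) * (i + 1 + k) * b i)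
    (m : ℕ) :
    ∑ r ∈ range (m + 1), ((m ! / r ! : ℕ) : K) * ((m + k).choose (r + k) : K) * b r =
      (k + 1) ^ m * b 0 := by
  have hne (n : ℕ) : (n ! : K) ≠ 0 := Nat.cast_ne_zero.mpr n.factorial_ne_zero
  obtain ⟨a, ha⟩ : ∃ a : ℕ → K, a = fun i => b i / (i ! * (i + k)! : K) := ⟨_, rfl⟩
  have hab (n : ℕ) : b n = n ! * (n + k)! * a n := by
    have := hne n
    have := hne (n + k)
    simp only [ha]
    field_simp
  have ha₁ : a 1 = 0 := by simp [ha, hb₁]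
  rw [sum_factorial_div_mul_choose_eq_expConv, ← ha]
  induction m with
  | zero => simp [expConv, hab 0]
  | succ m ih =>
    rw [show m + 1 + k = m + k + 1 by omega, Nat.factorial_succ, Nat.factorial_succ]
    push_cast
    linear_combination (k + 1 : K) * ih + (m ! * (m + k)! : K) *
      expConv_succ (k : K) ha₁ (recurrence_of_eq_factorial_mul k hab hrec) m

end ExpConv

section Bpoly

open Polynomial

lemma Polynomial.derivative_mvPolynomial_aeval {σ R : Type*} [Fintype σ] [CommSemiring R]
    (x : σ → R[X]) (p : MvPolynomial σ R) :
    derivative (MvPolynomial.aeval x p) =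
      ∑ i, MvPolynomial.aeval x (MvPolynomial.pderiv i p) * derivative (x i) := by
  induction p using MvPolynomial.induction_on with
  | C a => simp
  | add p q hp hq => simp [hp, hq, add_mul, sum_add_distrib]
  | mul_X p j hp =>
    classical
    simp [hp, derivative_mul, add_mul, sum_add_distrib, sum_mul,
      MvPolynomial.pderiv_X, Pi.single_apply, apply_ite (MvPolynomial.aeval x), ite_mul]
    rw [add_comm]
    congr 1
    refine sum_congr rfl fun i _ => ?_
    ring

def bcoef : ℕ → ℤ
  | 0 => 1
  | 1 => 0
  | n + 2 => -2 * (n + 1) * bcoef (n + 1) - (n + 1) * (n + 12) * bcoef n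

lemma aeval_sq_cube_Bpoly :
    ∀ n, MvPolynomial.aeval ![(X : ℤ[X]) ^ 2, X ^ 3] (Bpoly n) = C (bcoef n) * X ^ n
  | 0 => by simp [Bpoly, bcoef]
  | 1 => by simp [Bpoly, bcoef]
  | n + 2 => by
    have hD := derivative_mvPolynomial_aeval ![(X : ℤ[X]) ^ 2, X ^ 3] (Bpoly (n + 1))
    simp only [aeval_sq_cube_Bpoly (n + 1), Fin.sum_univ_two] at hD
    simp [Bpoly, bcoef, aeval_sq_cube_Bpoly n] at hD ⊢
    linear_combination (2 * X ^ 2 : ℤ[X]) * hD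

lemma aeval_one_one_Bpoly {A : Type*} [CommRing A] (n : ℕ) :
    MvPolynomial.aeval ![(1 : A), 1] (Bpoly n) = bcoef n := by
  have h := congrArg (Polynomial.aeval (1 : A)) (aeval_sq_cube_Bpoly n)
  rw [MvPolynomial.comp_aeval_apply] at h
  have h11 : (fun i => Polynomial.aeval (1 : A) (![(X : ℤ[X]) ^ 2, X ^ 3] i)) =
      ![1, 1] := by
    funext i
    fin_cases i <;> simp
  simpa [h11] using h

lemma sum_Bpoly_one_one (m : ℕ) :
    ∑ r ∈ range (m + 1), ((m ! / r ! : ℕ) : ℂ) * ((m + 11).choose (r + 11) : ℂ) *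
      MvPolynomial.aeval ![(1 : ℂ), 1] (Bpoly r) = 12 ^ m := by
  simp only [aeval_one_one_Bpoly]
  rw [sum_factorial_div_mul_choose_mul_eq_pow 11 (b := fun r => (bcoef r : ℂ)) (by simp [bcoef])
    (fun i => by push_cast [bcoef]; ring) m]
  norm_num [bcoef]

end Bpoly

open Filter Topology

lemma norm_cexp_two_pi_I_mul_succ (n : ℕ) (z : ℂ) :
    ‖Complex.exp (2 * π * I * (n + 1) * z)‖ = Real.exp (-2 * π * (n + 1) * z.im) := by
  rw [Complex.norm_exp]
  congr 1
  simp

lemma tendsto_tsum_mul_cexp_comap_im {c : ℕ → ℂ} {y₀ : ℝ}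
    (hc : Summable fun n : ℕ => ‖c n‖ * Real.exp (-2 * π * (n + 1) * y₀)) :
    Tendsto (fun z => ∑' n : ℕ, c n * Complex.exp (2 * π * I * (n + 1) * z))
      (comap im atTop) (𝓝 0) := by
  have hneg (n : ℕ) : -2 * π * (n + 1) < 0 :=
    mul_neg_of_neg_of_pos (by linarith [Real.pi_pos]) (by positivity)
  have hterm (n : ℕ) :
      Tendsto (fun z => c n * Complex.exp (2 * π * I * (n + 1) * z))
        (comap im atTop) (𝓝 0) := by
    rw [tendsto_zero_iff_norm_tendsto_zero]
    simp_rw [norm_mul, norm_cexp_two_pi_I_mul_succ]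
    have h : Tendsto (fun z : ℂ => -2 * π * (n + 1) * z.im) (comap im atTop) atBot :=
      tendsto_comap.const_mul_atTop_of_neg (hneg n)
    simpa using (Real.tendsto_exp_atBot.comp h).const_mul ‖c n‖
  have hbound : ∀ᶠ z in comap im atTop, ∀ n : ℕ,
      ‖c n * Complex.exp (2 * π * I * (n + 1) * z)‖ ≤
        ‖c n‖ * Real.exp (-2 * π * (n + 1) * y₀) := by
    filter_upwards [tendsto_comap.eventually_ge_atTop y₀] with z hz n
    rw [norm_mul, norm_cexp_two_pi_I_mul_succ]
    gcongr ‖c n‖ * Real.exp ?_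
    exact mul_le_mul_of_nonpos_left hz (hneg n).le
  simpa using tendsto_tsum_of_dominated_convergence hc hterm hbound

lemma tendsto_sigma_qSeries (k : ℕ) :
    Tendsto (fun z => ∑' n : ℕ, (ArithmeticFunction.sigma k (n + 1) : ℂ) *
      Complex.exp (2 * π * I * (n + 1) * z)) (comap im atTop) (𝓝 0) := by
  refine tendsto_tsum_mul_cexp_comap_im (y₀ := 1) ?_
  have h := (summable_nat_add_iff 1).mpr
    (Real.summable_pow_mul_exp_neg_nat_mul (k + 1) (r := 2 * π) (by positivity))
  refine h.of_nonneg_of_le (fun n => by positivity) fun n => ?_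
  rw [Complex.norm_natCast, mul_one, neg_mul]
  push_cast
  gcongr
  exact_mod_cast ArithmeticFunction.sigma_le_pow_succ k (n + 1)

lemma tendsto_E2star : Tendsto E2star (comap im atTop) (𝓝 1) := by
  have him : Tendsto (fun z : ℂ => 3 / (π * z.im)) (comap im atTop) (𝓝 0) :=
    tendsto_const_nhds.div_atTop ((tendsto_comap (f := im)).const_mul_atTop Real.pi_pos)
  have h := (((tendsto_sigma_qSeries 1).const_mul 24).const_sub 1).sub
    ((Complex.continuous_ofReal.tendsto 0).comp him)
  simp only [mul_zero, sub_zero, Complex.ofReal_zero] at h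
  refine h.congr fun z => ?_
  simp [E2star]

lemma tendsto_E4 : Tendsto E4 (comap im atTop) (𝓝 1) := by
  have h := ((tendsto_sigma_qSeries 3).const_mul 240).const_add 1
  rwa [mul_zero, add_zero] at h

lemma tendsto_E6 : Tendsto E6 (comap im atTop) (𝓝 1) := by
  have h := ((tendsto_sigma_qSeries 5).const_mul 504).const_sub 1
  rwa [mul_zero, sub_zero] at h

lemma MvPolynomial.continuous_aeval {σ R A : Type*} [CommSemiring R] [CommSemiring A] [Algebra R A]
    [TopologicalSpace A] [IsTopologicalSemiring A] (p : MvPolynomial σ R) :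
    Continuous fun x : σ → A => MvPolynomial.aeval x p := by
  simpa only [MvPolynomial.aeval_def, MvPolynomial.eval₂_eq_eval_map] using
    MvPolynomial.continuous_eval (p.map (algebraMap R A))

lemma tendsto_Ecal (m : ℕ) : Tendsto (Ecal m) (comap im atTop) (𝓝 (12 ^ m)) := by
  have hQR : Tendsto (fun z => ![E4 z, E6 z]) (comap im atTop) (𝓝 ![1, 1]) :=
    tendsto_E4.matrixVecCons (tendsto_E6.matrixVecCons tendsto_const_nhds)
  have h : Tendsto (Ecal m) (comap im atTop) (𝓝 (∑ r ∈ range (m + 1),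
      ((m ! / r ! : ℕ) : ℂ) * ((m + 11).choose (r + 11) : ℂ) * 1 ^ (m - r) *
        MvPolynomial.aeval ![(1 : ℂ), 1] (Bpoly r))) :=
    tendsto_finsetSum _ fun r _ => (tendsto_const_nhds.mul (tendsto_E2star.pow (m - r))).mul
      (((MvPolynomial.continuous_aeval (Bpoly r)).tendsto _).comp hQR)
  simpa [← sum_Bpoly_one_one m] using h

/-- `𝓔_m(x+iy) → 12^m` as `y → ∞`, uniformly in `x`. -/
theorem Ecal_tendsto_uniformly (m : ℕ) :
    ∀ ε : ℝ, 0 < ε → ∃ Y : ℝ, 0 < Y ∧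
      ∀ x y : ℝ, Y < y → ‖Ecal m ((x : ℂ) + (y : ℂ) * Complex.I) - 12 ^ m‖ < ε := by
  intro ε hε
  obtain ⟨Y, -, hY⟩ := ((atTop_basis.comap im).tendsto_iff Metric.nhds_basis_ball).mp
    (tendsto_Ecal m) ε hε
  refine ⟨max Y 1, by positivity, fun x y hy => ?_⟩
  have hz : ((x : ℂ) + y * I) ∈ im ⁻¹' Set.Ici Y := by
    simpa using (le_max_left Y 1).trans hy.le
  simpa [dist_eq_norm] using hY _ hz

end
end
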